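/- arXiv:2110.03755 — 2 statements merged into one kernel-verified Lean document; each statement's English description precedes it below -/
import Mathlib

section
/- Let ε > 0, γ ≥ 1, and let 𝒫 = 𝒫^{ε,γ}_{m,n} be the polynomial frame approximation with range ℙ^{ε,γ}_{m,n} = span{ξ_i : σ_i > ε}. Define C₁ = sup{ ‖p‖_{[−1,1],∞} : p ∈ ℙ^{ε,γ}_{m,n}, ‖p‖_{m,∞} ≤ 1 } and C₂ = sup{ ‖p − 𝒫(p)‖_{[−1,1],∞} : p ∈ ℙ_n, ‖p‖_{[−γ,γ],∞} ≤ 1/ε }. Then for every f ∈ C([−1,1]) and every p ∈ ℙ_n: ‖f − 𝒫(f)‖_{[−1,1],∞} ≤ (1 + √(m+1)·C₁)·‖f − p‖_{[−1,1],∞} + C₂·ε·‖p‖_{[−γ,γ],∞}. Moreover, the condition number satisfies C₁ ≤ κ(𝒫) ≤ √(m+1)·C₁. -/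
open Polynomial Set

noncomputable section

/-- The `m+1` equispaced nodes in `[-1,1]`: `x_i = -1 + 2i/m`. -/
def eqNode (m i : ℕ) : ℝ := -1 + 2 * i / m

/-- Evaluation of a complex polynomial at real points. -/
def pEval (p : Polynomial ℂ) : ℝ → ℂ := fun x => p.eval (x : ℂ)

/-- Uniform norm of a function on `[a,b]`. -/
def supNorm (a b : ℝ) (f : ℝ → ℂ) : ℝ := ⨆ x : Icc a b, ‖f (x : ℝ)‖

/-- Discrete uniform seminorm over the equispaced grid. -/
def mSup (m : ℕ) (f : ℝ → ℂ) : ℝ := ⨆ i : Fin (m + 1), ‖f (eqNode m i)‖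

/-- Discrete semi-inner product over the equispaced grid. -/
def mInner (m : ℕ) (f g : ℝ → ℂ) : ℂ :=
  (2 / (m + 1)) * ∑ i : Fin (m + 1), f (eqNode m i) * (starRingEnd ℂ) (g (eqNode m i))

/-- Discrete 2-seminorm over the equispaced grid. -/
def mNorm2 (m : ℕ) (f : ℝ → ℂ) : ℝ := Real.sqrt (mInner m f f).re

/-- `L²` inner product on `[a,b]`. -/
def innerI (a b : ℝ) (f g : ℝ → ℂ) : ℂ := ∫ x in a..b, f x * (starRingEnd ℂ) (g x)

/-- `L²` norm on `[a,b]`. -/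
def l2Norm (a b : ℝ) (f : ℝ → ℂ) : ℝ := Real.sqrt (innerI a b f f).re

/-- The polynomial frame approximation built from a doubly orthogonal family. -/
def PFA (m n : ℕ) (ε : ℝ) (ξ : Fin (n + 1) → Polynomial ℂ) (σ : Fin (n + 1) → ℝ)
    (f : ℝ → ℂ) : Polynomial ℂ :=
  ∑ i : Fin (n + 1),
    if ε < σ i then Polynomial.C (mInner m f (pEval (ξ i)) / ((σ i : ℂ)) ^ 2) * ξ i else 0

/-- The Bernstein ellipse with parameter `θ`. -/
def BE (θ : ℝ) : Set ℂ := {w | ∃ z : ℂ, 1 ≤ ‖z‖ ∧ ‖z‖ ≤ θ ∧ w = (z + z⁻¹) / 2}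

/-- Uniform norm over a subset of `ℂ`. -/
def supOn (S : Set ℂ) (f : ℂ → ℂ) : ℝ := ⨆ z : S, ‖f (z : ℂ)‖

/-- Condition number of a linear approximation map. -/
def kappaLin (m : ℕ) (R : (ℝ → ℂ) → (ℝ → ℂ)) : ℝ :=
  sSup {r | ∃ f : ℝ → ℂ, ContinuousOn f (Icc (-1) 1) ∧ mSup m f ≠ 0 ∧
    r = supNorm (-1) 1 (R f) / mSup m f}

/-- Condition number of a general (possibly nonlinear) approximation map. -/
def kappaGen (m : ℕ) (R : (ℝ → ℂ) → (ℝ → ℂ)) : ℝ :=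
  ⨆ f : {f : ℝ → ℂ // ContinuousOn f (Icc (-1) 1)},
    ⨅ δ : {d : ℝ // 0 < d},
      sSup {r | ∃ h : ℝ → ℂ, ContinuousOn h (Icc (-1) 1) ∧ 0 < mSup m h ∧ mSup m h ≤ δ.1 ∧
        r = supNorm (-1) 1 (fun x => R (f.1 + h) x - R f.1 x) / mSup m h}

/-- `C^k` norm on `[-1,1]`. -/
def ckNorm (k : ℕ) (f : ℝ → ℂ) : ℝ :=
  ⨆ j : Fin (k + 1), supNorm (-1) 1 (iteratedDerivWithin (j : ℕ) f (Icc (-1) 1))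

/-!
`𝒫` is the orthogonal projection, for the discrete inner product `⟨·,·⟩_{m,2}`, onto
`ℙ^{ε,γ}_{m,n}`: it fixes that space and `f - 𝒫 f` is discretely orthogonal to it. Hence
`‖𝒫 f‖_{m,2} ≤ ‖f‖_{m,2}`, which gives `‖𝒫 f‖_{m,∞} ≤ √(m+1) ‖f‖_{m,∞}`; since `𝒫 f` lies in
`ℙ^{ε,γ}_{m,n}`, homogeneity of the norms turns this into `‖𝒫 f‖_{[-1,1],∞} ≤ √(m+1) C₁ ‖f‖_{m,∞}`,
and `C₁ ≤ κ(𝒫)` because `𝒫` fixes `ℙ^{ε,γ}_{m,n}`. For the accuracy bound write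
`f - 𝒫 f = (f - p) - 𝒫 (f - p) + (p - 𝒫 p)` and bound the last term by `C₂ ε ‖p‖_{[-γ,γ],∞}`,
again by homogeneity.
-/

lemma le_sSup_div_mul_of_homogeneous {E : Type*} [SMul ℝ E] {S : Set E} {N F : E → ℝ}
    (hS : ∀ c : ℝ, 0 < c → ∀ x ∈ S, c • x ∈ S)
    (hN : ∀ c : ℝ, 0 < c → ∀ x ∈ S, N (c • x) = c * N x)
    (hF : ∀ c : ℝ, 0 < c → ∀ x ∈ S, F (c • x) = c * F x)
    {t : ℝ} (ht : 0 < t) (hbdd : BddAbove {r | ∃ x ∈ S, N x ≤ t ∧ r = F x})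
    {x : E} (hx : x ∈ S) (hNx : 0 ≤ N x) :
    F x ≤ sSup {r | ∃ x ∈ S, N x ≤ t ∧ r = F x} / t * N x := by
  set K := sSup {r | ∃ x ∈ S, N x ≤ t ∧ r = F x}
  have hmem : ∀ c : ℝ, 0 < c → c * N x ≤ t → c * F x ≤ K := fun c hc hcN =>
    le_csSup hbdd ⟨c • x, hS c hc x hx, (hN c hc x hx).trans_le hcN, (hF c hc x hx).symm⟩
  rcases hNx.eq_or_lt with h0 | hpos
  · -- all positive multiples of `x` lie in the ball, so `F x > 0` would make `K` infinite
    rw [← h0, mul_zero]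
    by_contra! hFx
    have hK : F x ≤ K := by simpa using hmem 1 one_pos (by rw [← h0, mul_zero]; exact ht.le)
    have h2K := hmem (2 * K / F x) (div_pos (mul_pos two_pos (hFx.trans_le hK)) hFx)
      (by rw [← h0, mul_zero]; exact ht.le)
    rw [div_mul_cancel₀ _ hFx.ne'] at h2K
    linarith
  · have h := hmem (t / N x) (by positivity) (div_mul_cancel₀ _ hpos.ne').le
    rw [div_mul_eq_mul_div, div_le_iff₀ hpos] at h
    rwa [div_mul_eq_mul_div, le_div_iff₀ ht, mul_comm]

section SupNorm

variable {a b : ℝ} {f g : ℝ → ℂ}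

lemma supNorm_nonneg : 0 ≤ supNorm a b f :=
  Real.iSup_nonneg fun _ => norm_nonneg _

lemma norm_le_supNorm (hf : ContinuousOn f (Icc a b)) {x : ℝ} (hx : x ∈ Icc a b) :
    ‖f x‖ ≤ supNorm a b f := by
  obtain ⟨C, hC⟩ := (isCompact_Icc.image_of_continuousOn hf.norm).bddAbove
  exact le_ciSup (f := fun x : Icc a b => ‖f x‖)
    ⟨C, by rintro _ ⟨y, rfl⟩; exact hC ⟨y, y.2, rfl⟩⟩ ⟨x, hx⟩

lemma supNorm_le {c : ℝ} (hc : 0 ≤ c) (h : ∀ x ∈ Icc a b, ‖f x‖ ≤ c) : supNorm a b f ≤ c :=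
  Real.iSup_le (fun x => h x x.2) hc

lemma supNorm_smul (c : ℝ) : supNorm a b (c • f) = |c| * supNorm a b f := by
  simp only [_root_.supNorm, Real.mul_iSup_of_nonneg (abs_nonneg c), Pi.smul_apply, norm_smul,
    Real.norm_eq_abs]

lemma supNorm_add_le (hf : ContinuousOn f (Icc a b)) (hg : ContinuousOn g (Icc a b)) :
    supNorm a b (f + g) ≤ supNorm a b f + supNorm a b g :=
  supNorm_le (add_nonneg supNorm_nonneg supNorm_nonneg) fun _ hx =>
    (norm_add_le _ _).trans (add_le_add (norm_le_supNorm hf hx) (norm_le_supNorm hg hx))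

lemma supNorm_sub_le (hf : ContinuousOn f (Icc a b)) (hg : ContinuousOn g (Icc a b)) :
    supNorm a b (f - g) ≤ supNorm a b f + supNorm a b g :=
  supNorm_le (add_nonneg supNorm_nonneg supNorm_nonneg) fun _ hx =>
    (norm_sub_le _ _).trans (add_le_add (norm_le_supNorm hf hx) (norm_le_supNorm hg hx))

lemma supNorm_mono {c d : ℝ} (h : Icc a b ⊆ Icc c d) (hf : ContinuousOn f (Icc c d)) :
    supNorm a b f ≤ supNorm c d f :=
  supNorm_le supNorm_nonneg fun _ hx => norm_le_supNorm hf (h hx)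

end SupNorm

section Nodes

variable {m : ℕ} {f g : ℝ → ℂ}

lemma mSup_nonneg : 0 ≤ mSup m f :=
  Real.iSup_nonneg fun _ => norm_nonneg _

lemma norm_le_mSup (i : Fin (m + 1)) : ‖f (eqNode m i)‖ ≤ mSup m f :=
  le_ciSup (f := fun i : Fin (m + 1) => ‖f (eqNode m i)‖) (finite_range _).bddAbove i

lemma mSup_smul (c : ℝ) : mSup m (c • f) = |c| * mSup m f := by
  simp only [mSup, Real.mul_iSup_of_nonneg (abs_nonneg c), Pi.smul_apply, norm_smul,
    Real.norm_eq_abs]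

-- For `m = 0` the single node is `-1`, since `2 * 0 / 0 = 0`.
lemma eqNode_mem_Icc (i : Fin (m + 1)) : eqNode m i ∈ Icc (-1 : ℝ) 1 := by
  have hi : (i : ℝ) ≤ m := by exact_mod_cast Nat.lt_succ_iff.mp i.2
  have h0 : 0 ≤ 2 * (i : ℝ) / m := by positivity
  have h2 : 2 * (i : ℝ) / m ≤ 2 := div_le_of_le_mul₀ (Nat.cast_nonneg m) zero_le_two (by linarith)
  constructor <;> unfold eqNode <;> linarith

lemma mSup_le_supNorm (hf : ContinuousOn f (Icc (-1) 1)) : mSup m f ≤ supNorm (-1) 1 f :=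
  Real.iSup_le (fun i => norm_le_supNorm hf (eqNode_mem_Icc i)) supNorm_nonneg

variable (m) in
def nodalValues : (ℝ → ℂ) →ₗ[ℂ] EuclideanSpace ℂ (Fin (m + 1)) where
  toFun f := WithLp.toLp 2 fun i => f (eqNode m i)
  map_add' _ _ := rfl
  map_smul' _ _ := rfl

@[simp]
lemma nodalValues_apply (i : Fin (m + 1)) : (nodalValues m f).ofLp i = f (eqNode m i) := rfl

lemma mInner_eq_inner :
    mInner m f g = 2 / (m + 1) * inner ℂ (nodalValues m g) (nodalValues m f) := by
  simp only [mInner, PiLp.inner_apply, RCLike.inner_apply, nodalValues_apply]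

lemma mSup_le_norm_nodalValues : mSup m f ≤ ‖nodalValues m f‖ :=
  Real.iSup_le (fun i => PiLp.norm_apply_le (nodalValues m f) i) (norm_nonneg _)

lemma norm_nodalValues_le : ‖nodalValues m f‖ ≤ √(m + 1) * mSup m f := by
  rw [EuclideanSpace.norm_eq, ← Real.sqrt_sq (mSup_nonneg (m := m) (f := f)), ← Real.sqrt_mul
    (by positivity)]
  gcongr
  calc ∑ i, ‖(nodalValues m f).ofLp i‖ ^ 2 ≤ ∑ _i : Fin (m + 1), mSup m f ^ 2 :=
        Finset.sum_le_sum fun i _ => pow_le_pow_left₀ (norm_nonneg _) (norm_le_mSup i) 2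
    _ = (m + 1) * mSup m f ^ 2 := by simp

lemma norm_mInner_le : ‖mInner m f g‖ ≤ 2 * mSup m f * mSup m g := by
  rw [mInner_eq_inner, norm_mul]
  calc ‖(2 / (m + 1) : ℂ)‖ * ‖inner ℂ (nodalValues m g) (nodalValues m f)‖
      ≤ 2 / (m + 1) * ((√(m + 1) * mSup m g) * (√(m + 1) * mSup m f)) := by
        gcongr
        · rw [norm_div, Complex.norm_ofNat, ← Nat.cast_succ, Complex.norm_natCast, Nat.cast_succ]
        · exact (norm_inner_le_norm _ _).trans (mul_le_mul norm_nodalValues_le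
            norm_nodalValues_le (norm_nonneg _) (mul_nonneg (Real.sqrt_nonneg _) mSup_nonneg))
    _ = 2 * mSup m f * mSup m g := by
        rw [mul_mul_mul_comm, Real.mul_self_sqrt (Nat.cast_add_one_pos m).le]
        field_simp

lemma mInner_add_left (f₁ f₂ g : ℝ → ℂ) :
    mInner m (f₁ + f₂) g = mInner m f₁ g + mInner m f₂ g := by
  simp only [mInner_eq_inner, map_add, inner_add_right, mul_add]

lemma mInner_smul_left (c : ℂ) (f g : ℝ → ℂ) : mInner m (c • f) g = c * mInner m f g := by
  simp only [mInner_eq_inner, map_smul, inner_smul_right]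
  ring

lemma mInner_sum_left {ι : Type*} (s : Finset ι) (f : ι → ℝ → ℂ) (g : ℝ → ℂ) :
    mInner m (∑ i ∈ s, f i) g = ∑ i ∈ s, mInner m (f i) g := by
  simp only [mInner_eq_inner, map_sum, inner_sum, Finset.mul_sum]

end Nodes

section Conditioning

variable {m : ℕ} {R : (ℝ → ℂ) → (ℝ → ℂ)} {K : ℝ}

lemma kappaLin_nonneg : 0 ≤ kappaLin m R :=
  Real.sSup_nonneg (by rintro _ ⟨f, -, -, rfl⟩; exact div_nonneg supNorm_nonneg mSup_nonneg)

lemma kappaLin_le (hK : 0 ≤ K)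
    (h : ∀ f, ContinuousOn f (Icc (-1) 1) → supNorm (-1) 1 (R f) ≤ K * mSup m f) :
    kappaLin m R ≤ K :=
  Real.sSup_le (by rintro _ ⟨f, hf, -, rfl⟩; exact div_le_of_le_mul₀ mSup_nonneg hK (h f hf)) hK

lemma div_le_kappaLin (hK : 0 ≤ K)
    (h : ∀ f, ContinuousOn f (Icc (-1) 1) → supNorm (-1) 1 (R f) ≤ K * mSup m f)
    {f : ℝ → ℂ} (hf : ContinuousOn f (Icc (-1) 1)) (hf0 : mSup m f ≠ 0) :
    supNorm (-1) 1 (R f) / mSup m f ≤ kappaLin m R :=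
  le_csSup ⟨K, by rintro _ ⟨g, hg, -, rfl⟩; exact div_le_of_le_mul₀ mSup_nonneg hK (h g hg)⟩
    ⟨f, hf, hf0, rfl⟩

end Conditioning

lemma continuous_pEval (p : ℂ[X]) : Continuous (pEval p) :=
  p.continuous.comp Complex.continuous_ofReal

def pEvalLinearMap : ℂ[X] →ₗ[ℂ] (ℝ → ℂ) where
  toFun := pEval
  map_add' p q := by ext; simp [pEval]
  map_smul' c p := by ext; simp [pEval]

@[simp]
lemma pEvalLinearMap_apply (p : ℂ[X]) : pEvalLinearMap p = pEval p := rfl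

lemma pEval_sub (p q : ℂ[X]) : pEval (p - q) = pEval p - pEval q :=
  map_sub pEvalLinearMap p q

lemma pEval_smul (c : ℝ) (p : ℂ[X]) : pEval (c • p) = c • pEval p :=
  pEvalLinearMap.map_smul_of_tower c p

section Frame

variable {m n : ℕ} {ε : ℝ} {ξ : Fin (n + 1) → ℂ[X]} {σ : Fin (n + 1) → ℝ}

variable (m n ε ξ σ) in
def pfaLinearMap : (ℝ → ℂ) →ₗ[ℂ] ℂ[X] where
  toFun := PFA m n ε ξ σ
  map_add' f g := by
    simp only [PFA, ← Finset.sum_add_distrib, mInner_add_left, add_div, C_add, add_mul]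
    exact Finset.sum_congr rfl fun i _ => by split_ifs <;> simp
  map_smul' c f := by
    simp only [PFA, Finset.smul_sum, mInner_smul_left, mul_div_assoc, C_mul, mul_assoc,
      smul_eq_C_mul, RingHom.id_apply]
    exact Finset.sum_congr rfl fun i _ => by split_ifs <;> simp

@[simp]
lemma pfaLinearMap_apply (f : ℝ → ℂ) : pfaLinearMap m n ε ξ σ f = PFA m n ε ξ σ f := rfl

variable (ε ξ σ) in
/-- The space `ℙ^{ε,γ}_{m,n}` of the paper. -/
def frameSpan : Submodule ℂ ℂ[X] := Submodule.span ℂ {q | ∃ i, ε < σ i ∧ q = ξ i}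

lemma PFA_mem_frameSpan (f : ℝ → ℂ) : PFA m n ε ξ σ f ∈ frameSpan ε ξ σ := by
  refine Submodule.sum_mem _ fun i _ => ?_
  split_ifs with hi
  · rw [← smul_eq_C_mul]
    exact Submodule.smul_mem _ _ (Submodule.subset_span ⟨i, hi, rfl⟩)
  · exact Submodule.zero_mem _

lemma exists_supNorm_PFA_le :
    ∃ B, 0 ≤ B ∧ ∀ f, supNorm (-1) 1 (pEval (PFA m n ε ξ σ f)) ≤ B * mSup m f := by
  set b : Fin (n + 1) → ℝ := fun i =>
    2 * mSup m (pEval (ξ i)) / σ i ^ 2 * supNorm (-1) 1 (pEval (ξ i))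
  have hb : ∀ i, 0 ≤ b i := fun i =>
    mul_nonneg (div_nonneg (mul_nonneg zero_le_two mSup_nonneg) (sq_nonneg _)) supNorm_nonneg
  refine ⟨∑ i, b i, Finset.sum_nonneg fun i _ => hb i, fun f => ?_⟩
  refine supNorm_le (mul_nonneg (Finset.sum_nonneg fun i _ => hb i) mSup_nonneg) fun x hx => ?_
  simp only [PFA, pEval, eval_finsetSum, Finset.sum_mul]
  refine (norm_sum_le _ _).trans (Finset.sum_le_sum fun i _ => ?_)
  split_ifs
  · calc ‖eval (x : ℂ) (C (mInner m f (pEval (ξ i)) / (σ i : ℂ) ^ 2) * ξ i)‖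
        = ‖mInner m f (pEval (ξ i))‖ / σ i ^ 2 * ‖pEval (ξ i) x‖ := by
          simp [pEval]
      _ ≤ 2 * mSup m f * mSup m (pEval (ξ i)) / σ i ^ 2 * supNorm (-1) 1 (pEval (ξ i)) := by
          gcongr
          · exact div_nonneg (mul_nonneg (mul_nonneg zero_le_two mSup_nonneg) mSup_nonneg)
              (sq_nonneg _)
          · exact norm_mInner_le
          · exact norm_le_supNorm (continuous_pEval _).continuousOn hx
      _ = b i * mSup m f := by ring
  · simpa using mul_nonneg (hb i) mSup_nonneg

lemma mInner_PFA_left (f g : ℝ → ℂ) :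
    mInner m (pEval (PFA m n ε ξ σ f)) g = ∑ i, if ε < σ i then
      mInner m f (pEval (ξ i)) / (σ i : ℂ) ^ 2 * mInner m (pEval (ξ i)) g else 0 := by
  rw [PFA, ← pEvalLinearMap_apply, map_sum, mInner_sum_left]
  refine Finset.sum_congr rfl fun i _ => ?_
  split_ifs
  · rw [← smul_eq_C_mul, map_smul, mInner_smul_left, pEvalLinearMap_apply]
  · rw [map_zero, ← zero_smul ℂ (0 : ℝ → ℂ), mInner_smul_left, zero_mul]

lemma supNorm_sub_PFA_le_sSup_mul {γ : ℝ} (hε : 0 < ε) (hγ : 1 ≤ γ) {p : ℂ[X]}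
    (hp : p.natDegree ≤ n) :
    supNorm (-1) 1 (pEval (p - PFA m n ε ξ σ (pEval p))) ≤
      sSup {r : ℝ | ∃ p : ℂ[X], p.natDegree ≤ n ∧ supNorm (-γ) γ (pEval p) ≤ 1 / ε ∧
        r = supNorm (-1) 1 (pEval (p - PFA m n ε ξ σ (pEval p)))} * ε *
        supNorm (-γ) γ (pEval p) := by
  obtain ⟨B, hB, hPB⟩ := exists_supNorm_PFA_le (m := m) (ε := ε) (ξ := ξ) (σ := σ)
  have hsmul : ∀ (c : ℝ) (p : ℂ[X]), c • p - PFA m n ε ξ σ (pEval (c • p)) =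
      c • (p - PFA m n ε ξ σ (pEval p)) := fun c p => by
    rw [pEval_smul, ← pfaLinearMap_apply, LinearMap.map_smul_of_tower, smul_sub,
      pfaLinearMap_apply]
  have hbdd : BddAbove {r : ℝ | ∃ p : ℂ[X], p.natDegree ≤ n ∧
      supNorm (-γ) γ (pEval p) ≤ 1 / ε ∧
      r = supNorm (-1) 1 (pEval (p - PFA m n ε ξ σ (pEval p)))} := by
    refine ⟨(1 + B) * (1 / ε), ?_⟩
    rintro _ ⟨p, -, hpγ, rfl⟩
    have hcont := (continuous_pEval p).continuousOn (s := Icc (-1) 1)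
    have h1 : supNorm (-1) 1 (pEval p) ≤ supNorm (-γ) γ (pEval p) :=
      supNorm_mono (Icc_subset_Icc (neg_le_neg hγ) hγ) (continuous_pEval p).continuousOn
    calc supNorm (-1) 1 (pEval (p - PFA m n ε ξ σ (pEval p)))
        ≤ supNorm (-1) 1 (pEval p) + B * mSup m (pEval p) := by
          rw [pEval_sub]
          exact (supNorm_sub_le hcont (continuous_pEval _).continuousOn).trans
            (add_le_add le_rfl (hPB _))
      _ ≤ (1 + B) * supNorm (-1) 1 (pEval p) := by
          linarith [mul_le_mul_of_nonneg_left (mSup_le_supNorm (m := m) hcont) hB]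
      _ ≤ (1 + B) * (1 / ε) := by gcongr; exact h1.trans hpγ
  have h := le_sSup_div_mul_of_homogeneous (S := {p : ℂ[X] | p.natDegree ≤ n})
    (N := fun p => supNorm (-γ) γ (pEval p))
    (F := fun p => supNorm (-1) 1 (pEval (p - PFA m n ε ξ σ (pEval p))))
    (fun c _ p hp => (natDegree_smul_le c p).trans hp)
    (fun c hc p _ => by simp [pEval_smul, supNorm_smul, abs_of_pos hc])
    (fun c hc p _ => by rw [hsmul, pEval_smul, supNorm_smul, abs_of_pos hc])
    (one_div_pos.mpr hε) hbdd hp supNorm_nonneg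
  simpa only [div_div_eq_mul_div, div_one, mem_ofPred_eq] using h

lemma supNorm_sub_PFA_le {A : ℝ} (hA : ∀ g, ContinuousOn g (Icc (-1) 1) →
      supNorm (-1) 1 (pEval (PFA m n ε ξ σ g)) ≤ A * supNorm (-1) 1 g)
    {f : ℝ → ℂ} (hf : ContinuousOn f (Icc (-1) 1)) (p : ℂ[X]) :
    supNorm (-1) 1 (f - pEval (PFA m n ε ξ σ f)) ≤
      (1 + A) * supNorm (-1) 1 (f - pEval p) +
        supNorm (-1) 1 (pEval (p - PFA m n ε ξ σ (pEval p))) := by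
  have hfp : ContinuousOn (f - pEval p) (Icc (-1) 1) := hf.sub (continuous_pEval p).continuousOn
  have hsplit : f - pEval (PFA m n ε ξ σ f) = (f - pEval p - pEval (PFA m n ε ξ σ (f - pEval p)))
      + pEval (p - PFA m n ε ξ σ (pEval p)) := by
    simp only [← pfaLinearMap_apply, map_sub, pEval_sub]
    abel
  calc supNorm (-1) 1 (f - pEval (PFA m n ε ξ σ f))
      ≤ supNorm (-1) 1 (f - pEval p) + supNorm (-1) 1 (pEval (PFA m n ε ξ σ (f - pEval p)))
        + supNorm (-1) 1 (pEval (p - PFA m n ε ξ σ (pEval p))) := by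
        rw [hsplit]
        exact (supNorm_add_le (hfp.sub (continuous_pEval _).continuousOn)
          (continuous_pEval _).continuousOn).trans
          (add_le_add (supNorm_sub_le hfp (continuous_pEval _).continuousOn) le_rfl)
    _ ≤ (1 + A) * supNorm (-1) 1 (f - pEval p) +
        supNorm (-1) 1 (pEval (p - PFA m n ε ξ σ (pEval p))) := by
        linarith [hA _ hfp]

section Orthogonal

variable (horthm : ∀ i j, mInner m (pEval (ξ i)) (pEval (ξ j)) =
  if i = j then ((σ i : ℂ)) ^ 2 else 0)
include horthm

lemma PFA_pEval_self (hε : 0 ≤ ε) {j : Fin (n + 1)} (hj : ε < σ j) :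
    PFA m n ε ξ σ (pEval (ξ j)) = ξ j := by
  have hσ : (σ j : ℂ) ^ 2 ≠ 0 := by exact_mod_cast (pow_pos (hε.trans_lt hj) 2).ne'
  rw [PFA, Finset.sum_eq_single j]
  · simp [hj, horthm, hσ]
  · intro i _ hij
    simp [horthm, Ne.symm hij]
  · simp

lemma PFA_pEval_of_mem (hε : 0 ≤ ε) {q : ℂ[X]} (hq : q ∈ frameSpan ε ξ σ) :
    PFA m n ε ξ σ (pEval q) = q := by
  have : frameSpan ε ξ σ ≤
      LinearMap.eqLocus (pfaLinearMap m n ε ξ σ ∘ₗ pEvalLinearMap) LinearMap.id := by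
    refine Submodule.span_le.mpr ?_
    rintro _ ⟨j, hj, rfl⟩
    exact PFA_pEval_self horthm hε hj
  exact this hq

lemma mInner_PFA_eq_of_lt (hε : 0 ≤ ε) (f : ℝ → ℂ) {j : Fin (n + 1)} (hj : ε < σ j) :
    mInner m (pEval (PFA m n ε ξ σ f)) (pEval (ξ j)) = mInner m f (pEval (ξ j)) := by
  have hσ : (σ j : ℂ) ^ 2 ≠ 0 := by exact_mod_cast (pow_pos (hε.trans_lt hj) 2).ne'
  rw [mInner_PFA_left, Finset.sum_eq_single j]
  · simp [hj, horthm, hσ]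
  · intro i _ hij
    simp [horthm, hij]
  · simp

lemma inner_nodalValues_sub_PFA_eq_zero (hε : 0 ≤ ε) (f : ℝ → ℂ) {q : ℂ[X]}
    (hq : q ∈ frameSpan ε ξ σ) :
    inner ℂ (nodalValues m (pEval q)) (nodalValues m (f - pEval (PFA m n ε ξ σ f))) = 0 := by
  have : frameSpan ε ξ σ ≤ LinearMap.ker
      (((innerₛₗ ℂ).flip (nodalValues m (f - pEval (PFA m n ε ξ σ f)))).comp
        (nodalValues m ∘ₗ pEvalLinearMap)) := by
    refine Submodule.span_le.mpr ?_
    rintro _ ⟨j, hj, rfl⟩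
    have h := mInner_PFA_eq_of_lt horthm hε f hj
    rw [mInner_eq_inner, mInner_eq_inner,
      mul_right_inj' (div_ne_zero two_ne_zero (Nat.cast_add_one_ne_zero m))] at h
    simp [h]
  exact this hq

lemma norm_nodalValues_PFA_le (hε : 0 ≤ ε) (f : ℝ → ℂ) :
    ‖nodalValues m (pEval (PFA m n ε ξ σ f))‖ ≤ ‖nodalValues m f‖ := by
  have h := norm_add_sq_eq_norm_sq_add_norm_sq_of_inner_eq_zero _ _
    (inner_nodalValues_sub_PFA_eq_zero horthm hε f (PFA_mem_frameSpan (m := m) f))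
  rw [← map_add, add_sub_cancel] at h
  exact nonneg_le_nonneg_of_sq_le_sq (norm_nonneg _)
    (h ▸ le_add_of_nonneg_right (mul_self_nonneg _))

lemma mSup_PFA_le (hε : 0 ≤ ε) (f : ℝ → ℂ) :
    mSup m (pEval (PFA m n ε ξ σ f)) ≤ √(m + 1) * mSup m f :=
  mSup_le_norm_nodalValues.trans ((norm_nodalValues_PFA_le horthm hε f).trans norm_nodalValues_le)

lemma supNorm_le_sSup_mul_mSup (hε : 0 ≤ ε) {q : ℂ[X]} (hq : q ∈ frameSpan ε ξ σ) :
    supNorm (-1) 1 (pEval q) ≤ sSup {r : ℝ | ∃ p : ℂ[X], p ∈ frameSpan ε ξ σ ∧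
      mSup m (pEval p) ≤ 1 ∧ r = supNorm (-1) 1 (pEval p)} * mSup m (pEval q) := by
  obtain ⟨B, hB, hPB⟩ := exists_supNorm_PFA_le (m := m) (ε := ε) (ξ := ξ) (σ := σ)
  have hbdd : BddAbove {r : ℝ | ∃ p : ℂ[X], p ∈ frameSpan ε ξ σ ∧
      mSup m (pEval p) ≤ 1 ∧ r = supNorm (-1) 1 (pEval p)} := by
    refine ⟨B, ?_⟩
    rintro _ ⟨p, hp, hp1, rfl⟩
    rw [← PFA_pEval_of_mem horthm hε hp]
    exact (hPB _).trans (mul_le_of_le_one_right hB hp1)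
  simpa using le_sSup_div_mul_of_homogeneous (S := frameSpan ε ξ σ)
    (N := fun p => mSup m (pEval p)) (F := fun p => supNorm (-1) 1 (pEval p))
    (fun c _ p hp => Submodule.smul_of_tower_mem _ c hp)
    (fun c hc p _ => by simp [pEval_smul, mSup_smul, abs_of_pos hc])
    (fun c hc p _ => by simp [pEval_smul, supNorm_smul, abs_of_pos hc])
    one_pos hbdd hq mSup_nonneg

lemma sSup_le_kappaLin_PFA (hε : 0 ≤ ε) {K : ℝ} (hK : 0 ≤ K)
    (hstab : ∀ f, supNorm (-1) 1 (pEval (PFA m n ε ξ σ f)) ≤ K * mSup m f) :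
    sSup {r : ℝ | ∃ p : ℂ[X], p ∈ frameSpan ε ξ σ ∧ mSup m (pEval p) ≤ 1 ∧
      r = supNorm (-1) 1 (pEval p)} ≤ kappaLin m (fun f => pEval (PFA m n ε ξ σ f)) := by
  refine Real.sSup_le ?_ kappaLin_nonneg
  rintro _ ⟨q, hq, hq1, rfl⟩
  rw [← PFA_pEval_of_mem horthm hε hq]
  rcases (mSup_nonneg (m := m) (f := pEval q)).eq_or_lt with h0 | hpos
  · exact (hstab _).trans (by rw [← h0, mul_zero]; exact kappaLin_nonneg)
  · exact (le_div_self supNorm_nonneg hpos hq1).trans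
      (div_le_kappaLin hK (fun f _ => hstab f) (continuous_pEval q).continuousOn hpos.ne')

end Orthogonal

end Frame

theorem stmt_5_general
    (ε γ : ℝ) (hε : 0 < ε) (hγ : 1 ≤ γ)
    (n m : ℕ)
    -- a doubly orthogonal family coming from the SVD of the least-squares matrix
    (ξ : Fin (n + 1) → Polynomial ℂ) (σ : Fin (n + 1) → ℝ)
    (horthm : ∀ i j, mInner m (pEval (ξ i)) (pEval (ξ j)) =
      if i = j then ((σ i : ℂ)) ^ 2 else 0)
    (C₁ C₂ : ℝ)
    (hC₁ : C₁ = sSup {r : ℝ | ∃ p : Polynomial ℂ,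
      p ∈ Submodule.span ℂ {q : Polynomial ℂ | ∃ i, ε < σ i ∧ q = ξ i} ∧
      mSup m (pEval p) ≤ 1 ∧ r = supNorm (-1) 1 (pEval p)})
    (hC₂ : C₂ = sSup {r : ℝ | ∃ p : Polynomial ℂ, p.natDegree ≤ n ∧
      supNorm (-γ) γ (pEval p) ≤ 1 / ε ∧
      r = supNorm (-1) 1 (pEval (p - PFA m n ε ξ σ (pEval p)))}) :
    -- the accuracy bound
    (∀ f : ℝ → ℂ, ContinuousOn f (Icc (-1) 1) → ∀ p : Polynomial ℂ, p.natDegree ≤ n →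
      supNorm (-1) 1 (fun x => f x - pEval (PFA m n ε ξ σ f) x) ≤
        (1 + Real.sqrt (m + 1) * C₁) * supNorm (-1) 1 (fun x => f x - pEval p x)
          + C₂ * ε * supNorm (-γ) γ (pEval p))
    -- the conditioning bounds
    ∧ C₁ ≤ kappaLin m (fun f => pEval (PFA m n ε ξ σ f))
    ∧ kappaLin m (fun f => pEval (PFA m n ε ξ σ f)) ≤ Real.sqrt (m + 1) * C₁ := by
  have hC₁_nonneg : 0 ≤ C₁ :=
    hC₁ ▸ Real.sSup_nonneg (by rintro _ ⟨p, -, -, rfl⟩; exact supNorm_nonneg)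
  have hK : 0 ≤ √(m + 1) * C₁ := by positivity
  have hstab : ∀ f, supNorm (-1) 1 (pEval (PFA m n ε ξ σ f)) ≤ √(m + 1) * C₁ * mSup m f :=
    fun f => calc
      _ ≤ C₁ * mSup m (pEval (PFA m n ε ξ σ f)) :=
          hC₁ ▸ supNorm_le_sSup_mul_mSup horthm hε.le (PFA_mem_frameSpan f)
      _ ≤ C₁ * (√(m + 1) * mSup m f) := by gcongr; exact mSup_PFA_le horthm hε.le f
      _ = √(m + 1) * C₁ * mSup m f := by ring
  refine ⟨fun f hf p hp => ?_, hC₁ ▸ sSup_le_kappaLin_PFA horthm hε.le hK hstab,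
    kappaLin_le hK fun f _ => hstab f⟩
  refine (supNorm_sub_PFA_le (A := √(m + 1) * C₁) (fun g hg => (hstab g).trans
    (mul_le_mul_of_nonneg_left (mSup_le_supNorm hg) hK)) hf p).trans ?_
  exact add_le_add le_rfl (hC₂ ▸ supNorm_sub_PFA_le_sSup_mul hε hγ hp)

/-- **Accuracy and conditioning of polynomial frame approximation** (Lemma 3.1). -/
theorem stmt_5
    (ε γ : ℝ) (hε : 0 < ε) (hγ : 1 ≤ γ)
    (n m : ℕ) (hn : 1 ≤ n) (hm : 1 ≤ m)
    -- a doubly orthogonal family coming from the SVD of the least-squares matrix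
    (ξ : Fin (n + 1) → Polynomial ℂ) (σ : Fin (n + 1) → ℝ)
    (hξdeg : ∀ i, (ξ i).natDegree ≤ n) (hσ : ∀ i, 0 ≤ σ i)
    (horth : ∀ i j, innerI (-γ) γ (pEval (ξ i)) (pEval (ξ j)) = if i = j then 1 else 0)
    (horthm : ∀ i j, mInner m (pEval (ξ i)) (pEval (ξ j)) =
      if i = j then ((σ i : ℂ)) ^ 2 else 0)
    (C₁ C₂ : ℝ)
    (hC₁ : C₁ = sSup {r : ℝ | ∃ p : Polynomial ℂ,
      p ∈ Submodule.span ℂ {q : Polynomial ℂ | ∃ i, ε < σ i ∧ q = ξ i} ∧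
      mSup m (pEval p) ≤ 1 ∧ r = supNorm (-1) 1 (pEval p)})
    (hC₂ : C₂ = sSup {r : ℝ | ∃ p : Polynomial ℂ, p.natDegree ≤ n ∧
      supNorm (-γ) γ (pEval p) ≤ 1 / ε ∧
      r = supNorm (-1) 1 (pEval (p - PFA m n ε ξ σ (pEval p)))}) :
    -- the accuracy bound
    (∀ f : ℝ → ℂ, ContinuousOn f (Icc (-1) 1) → ∀ p : Polynomial ℂ, p.natDegree ≤ n →
      supNorm (-1) 1 (fun x => f x - pEval (PFA m n ε ξ σ f) x) ≤
        (1 + Real.sqrt (m + 1) * C₁) * supNorm (-1) 1 (fun x => f x - pEval p x)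
          + C₂ * ε * supNorm (-γ) γ (pEval p))
    -- the conditioning bounds
    ∧ C₁ ≤ kappaLin m (fun f => pEval (PFA m n ε ξ σ f))
    ∧ kappaLin m (fun f => pEval (PFA m n ε ξ σ f)) ≤ Real.sqrt (m + 1) * C₁ :=
  stmt_5_general ε γ hε hγ n m ξ σ horthm C₁ C₂ hC₁ hC₂

end
end

section
/- Let n, k ∈ ℕ and δ ∈ (0,1) with 1 ≤ k ≤ n·√((1−δ²)/2), and let x be real with |x| ≤ δ. For m ≥ 1 set c_{m,k} = binom(k−1+m, 2m)·((2m−1)!!)². Then Σ_{m=1}^{k−1} c_{m,k} / ( (1−x²)^m · ∏_{s=1}^{m}(n²−s²) ) < 1/√π. -/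
/-!
Pairing the factors of the falling factorial `(k-1+m)(k-2+m)⋯(k-m)` as `(k-s)(k+s-1) ≤ k² - s²`
and writing `((2m-1)!!)² = (2m)!·C(2m,m)/4^m` gives `c_{m,k} ≤ ∏_{s ≤ m} (k² - s²) / 2`.
Since `k² ≤ n²(1-x²)/2`, each factor `k² - s²` is at most `(1-x²)/2·(n² - s²)`, so the `m`-th
summand is at most `2^{-(m+1)}` and the sum is at most `1/2 < 1/√π`.
-/

open Finset

noncomputable section

/-- The constant `c_{m,k} = C(k-1+m, 2m)·((2m-1)!!)²` from the Schaeffer–Duffin/Shadrin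
expression for `D_{n,k}`. -/
def cmk (m k : ℕ) : ℝ :=
  ((k - 1 + m).choose (2 * m) : ℝ) * (Nat.doubleFactorial (2 * m - 1) : ℝ) ^ 2

open scoped Nat

theorem Nat.descFactorial_add_two_mul (k m : ℕ) :
    (k + m).descFactorial (2 * m) = ∏ s ∈ Icc 1 m, (k + 1 - s) * (k + s) := by
  induction m with
  | zero => simp
  | succ m ih =>
    rw [prod_Icc_succ_top (by omega), ← ih, show k + (m + 1) = k + m + 1 by ring,
      show 2 * (m + 1) = 2 * m + 1 + 1 by ring, Nat.succ_descFactorial_succ,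
      Nat.descFactorial_succ, show k + m - 2 * m = k + 1 - (m + 1) by omega]
    ring

theorem Nat.two_mul_centralBinom_le_four_pow {m : ℕ} (hm : 0 < m) :
    2 * m.centralBinom ≤ 4 ^ m := by
  obtain ⟨p, rfl⟩ := Nat.exists_eq_add_of_lt hm
  have h : (p + 1).centralBinom = 2 * (2 * p + 1).choose p := by
    rw [Nat.centralBinom_eq_two_mul_choose, show 2 * (p + 1) = 2 * p + 1 + 1 by ring,
      Nat.choose_succ_succ', Nat.choose_symm_half, ← two_mul]
  rw [zero_add, h, pow_succ]
  linarith [Nat.choose_middle_le_pow p]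

theorem Nat.doubleFactorial_sq_mul_four_pow (m : ℕ) :
    (2 * m - 1)‼ ^ 2 * 4 ^ m = (2 * m)! * m.centralBinom := by
  have hcb : m.centralBinom * m ! * m ! = (2 * m)! := by
    rw [Nat.centralBinom_eq_two_mul_choose]
    simpa [show 2 * m - m = m by omega] using
      Nat.choose_mul_factorial_mul_factorial (show m ≤ 2 * m by omega)
  have hdf : 2 ^ m * m ! * (2 * m - 1)‼ = (2 * m)! := by
    cases m with
    | zero => simp
    | succ p =>
      rw [← Nat.doubleFactorial_two_mul, show 2 * (p + 1) = 2 * p + 1 + 1 by ring,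
        Nat.factorial_eq_mul_doubleFactorial]
      rfl
  have hpos : 0 < m ! ^ 2 := by positivity
  refine Nat.eq_of_mul_eq_mul_right hpos ?_
  calc (2 * m - 1)‼ ^ 2 * 4 ^ m * m ! ^ 2 = (2 ^ m * m ! * (2 * m - 1)‼) ^ 2 := by
        rw [show (4 : ℕ) = 2 ^ 2 by rfl, ← pow_mul, mul_comm 2 m, pow_mul]; ring
    _ = (2 * m)! * m.centralBinom * m ! ^ 2 := by rw [hdf, ← hcb]; ring

theorem descFactorial_sub_one_add_le_prod_sq_sub_sq {k m : ℕ} (hmk : m ≤ k) :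
    ((k - 1 + m).descFactorial (2 * m) : ℝ) ≤ ∏ s ∈ Icc 1 m, ((k : ℝ) ^ 2 - (s : ℝ) ^ 2) := by
  rcases Nat.eq_zero_or_pos k with rfl | hk
  · simp [Nat.le_zero.mp hmk]
  rw [Nat.descFactorial_add_two_mul, Nat.cast_prod]
  refine prod_le_prod (fun s _ => by positivity) fun s hs => ?_
  have hsk : s ≤ k := (mem_Icc.mp hs).2.trans hmk
  rw [Nat.cast_mul, Nat.cast_sub (by omega), Nat.cast_add, Nat.cast_sub (by omega)]
  push_cast [Nat.cast_sub (by omega : 1 ≤ k)]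
  nlinarith [(Nat.cast_le (α := ℝ)).mpr hsk]

theorem cmk_mul_four_pow (m k : ℕ) :
    cmk m k * 4 ^ m = (k - 1 + m).descFactorial (2 * m) * m.centralBinom := by
  have h : (k - 1 + m).choose (2 * m) * (2 * m - 1)‼ ^ 2 * 4 ^ m =
      (k - 1 + m).descFactorial (2 * m) * m.centralBinom := by
    rw [mul_assoc, Nat.doubleFactorial_sq_mul_four_pow, Nat.descFactorial_eq_factorial_mul_choose]
    ring
  rw [cmk]
  exact_mod_cast h

theorem cmk_le_half_prod {m k : ℕ} (hm : 0 < m) (hmk : m ≤ k) :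
    cmk m k ≤ (∏ s ∈ Icc 1 m, ((k : ℝ) ^ 2 - (s : ℝ) ^ 2)) / 2 := by
  have h4 : (0 : ℝ) < 4 ^ m := by positivity
  have hcb : 2 * (m.centralBinom : ℝ) ≤ 4 ^ m := by
    exact_mod_cast Nat.two_mul_centralBinom_le_four_pow hm
  rw [← mul_le_mul_iff_of_pos_right h4, cmk_mul_four_pow]
  have hD := descFactorial_sub_one_add_le_prod_sq_sub_sq hmk
  have hD0 : (0 : ℝ) ≤ (k - 1 + m).descFactorial (2 * m) := by positivity
  nlinarith

theorem prod_sq_sub_sq_le_pow_mul_prod {k n m : ℕ} {a : ℝ} (ha : a ≤ 1)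
    (hkn : (k : ℝ) ^ 2 ≤ a * n ^ 2) (hmk : m ≤ k) :
    ∏ s ∈ Icc 1 m, ((k : ℝ) ^ 2 - (s : ℝ) ^ 2) ≤
      a ^ m * ∏ s ∈ Icc 1 m, ((n : ℝ) ^ 2 - (s : ℝ) ^ 2) := by
  have hpow : a ^ m = ∏ _s ∈ Icc 1 m, a := by simp
  rw [hpow, ← prod_mul_distrib]
  refine prod_le_prod (fun s hs => ?_) fun s _ => by nlinarith [sq_nonneg (s : ℝ)]
  have hsk : (s : ℝ) ≤ k := by exact_mod_cast (mem_Icc.mp hs).2.trans hmk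
  nlinarith [(Nat.cast_nonneg (α := ℝ) s)]

theorem cmk_div_le_half_pow_succ {n k m : ℕ} {y : ℝ} (hy0 : 0 < y) (hy2 : y ≤ 2)
    (hkn : (k : ℝ) ^ 2 ≤ y / 2 * n ^ 2) (hm : 0 < m) (hmk : m < k) :
    cmk m k / (y ^ m * ∏ s ∈ Icc 1 m, ((n : ℝ) ^ 2 - (s : ℝ) ^ 2)) ≤ (1 / 2) ^ (m + 1) := by
  have hk_le_n : k ≤ n := by
    have : (k : ℝ) ^ 2 ≤ (n : ℝ) ^ 2 := by nlinarith [sq_nonneg (n : ℝ)]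
    exact_mod_cast (pow_le_pow_iff_left₀ (by positivity) (by positivity) two_ne_zero).mp this
  have hP : 0 < ∏ s ∈ Icc 1 m, ((n : ℝ) ^ 2 - (s : ℝ) ^ 2) := by
    refine prod_pos fun s hs => ?_
    have : (s : ℝ) < n := by exact_mod_cast (mem_Icc.mp hs).2.trans_lt (hmk.trans_le hk_le_n)
    nlinarith [(Nat.cast_nonneg (α := ℝ) s)]
  rw [div_le_iff₀ (by positivity)]
  calc cmk m k ≤ (y / 2) ^ m * (∏ s ∈ Icc 1 m, ((n : ℝ) ^ 2 - (s : ℝ) ^ 2)) / 2 :=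
        (cmk_le_half_prod hm hmk.le).trans
          (by gcongr; exact prod_sq_sub_sq_le_pow_mul_prod (by linarith) hkn hmk.le)
    _ = _ := by simp only [div_pow, one_pow]; field_simp; ring

theorem sum_Ico_one_half_pow_succ_le (k : ℕ) :
    ∑ m ∈ Ico 1 k, ((1 : ℝ) / 2) ^ (m + 1) ≤ 1 / 2 := by
  calc ∑ m ∈ Ico 1 k, ((1 : ℝ) / 2) ^ (m + 1)
        = (∑ m ∈ Ico 1 k, ((1 : ℝ) / 2) ^ m) * (1 / 2) := by
        simp_rw [pow_succ, sum_mul]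
    _ ≤ (1 / 2) ^ 1 / (1 - 1 / 2) * (1 / 2) := by
        gcongr; exact geom_sum_Ico_le_of_lt_one (by norm_num) (by norm_num)
    _ = 1 / 2 := by norm_num

theorem one_half_lt_one_div_sqrt_pi : (1 : ℝ) / 2 < 1 / Real.sqrt Real.pi := by
  have : Real.sqrt Real.pi < 2 := by
    rw [Real.sqrt_lt' two_pos]; linarith [Real.pi_lt_four]
  gcongr

theorem stmt_16_general
    (n k : ℕ) (δ : ℝ)
    (hk : 1 ≤ k) (hkn : (k : ℝ) ≤ n * Real.sqrt ((1 - δ ^ 2) / 2))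
    (x : ℝ) (hx : |x| ≤ δ) :
    ∑ m ∈ Finset.Ico 1 k,
        cmk m k / ((1 - x ^ 2) ^ m * ∏ s ∈ Finset.Icc 1 m, ((n : ℝ) ^ 2 - (s : ℝ) ^ 2)) <
      1 / Real.sqrt Real.pi := by
  have hk0 : (0 : ℝ) < k := by exact_mod_cast hk
  have ha : 0 < (1 - δ ^ 2) / 2 :=
    Real.sqrt_pos.mp (pos_of_mul_pos_right (hk0.trans_le hkn) (Nat.cast_nonneg n))
  have hxδ : x ^ 2 ≤ δ ^ 2 := sq_abs x ▸ pow_le_pow_left₀ (abs_nonneg x) hx 2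
  have hk_sq : (k : ℝ) ^ 2 ≤ (1 - x ^ 2) / 2 * n ^ 2 :=
    calc (k : ℝ) ^ 2 ≤ (n * Real.sqrt ((1 - δ ^ 2) / 2)) ^ 2 := by gcongr
      _ = (1 - δ ^ 2) / 2 * n ^ 2 := by rw [mul_pow, Real.sq_sqrt ha.le, mul_comm]
      _ ≤ (1 - x ^ 2) / 2 * n ^ 2 := by gcongr
  calc _ ≤ ∑ m ∈ Ico 1 k, ((1 : ℝ) / 2) ^ (m + 1) :=
        sum_le_sum fun m hm => cmk_div_le_half_pow_succ (by linarith) (by linarith [sq_nonneg x])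
          hk_sq (mem_Ico.mp hm).1 (mem_Ico.mp hm).2
    _ ≤ 1 / 2 := sum_Ico_one_half_pow_succ_le k
    _ < 1 / Real.sqrt Real.pi := one_half_lt_one_div_sqrt_pi

/-- The bound `B_{n,k}(x) < 1/√π` from the proof of the pointwise Markov inequality. -/
theorem stmt_16
    (n k : ℕ) (δ : ℝ) (hδ0 : 0 < δ) (hδ1 : δ < 1)
    (hk : 1 ≤ k) (hkn : (k : ℝ) ≤ n * Real.sqrt ((1 - δ ^ 2) / 2))
    (x : ℝ) (hx : |x| ≤ δ) :
    ∑ m ∈ Finset.Ico 1 k,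
        cmk m k / ((1 - x ^ 2) ^ m * ∏ s ∈ Finset.Icc 1 m, ((n : ℝ) ^ 2 - (s : ℝ) ^ 2)) <
      1 / Real.sqrt Real.pi :=
  stmt_16_general n k δ hk hkn x hx

end
end
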